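/- arXiv:1512.03354 — 2 statements merged into one kernel-verified Lean document; each statement's English description precedes it below -/
import Mathlib

section
/- For all r in the open interval (1,2), the constant C_r = r^{1/(2r)} · t^{-1/(2t)}, where t = r/(r-1) is the conjugate exponent of r, satisfies C_r < 1. -/
open Real

/-- For every `r ∈ (1,2)`, with `t = r/(r-1)` the conjugate exponent, the constant
`C_r = r^(1/(2r)) * t^(-1/(2t))` satisfies `C_r < 1`. -/
theorem constant_lt_one :
    ∀ r : ℝ, 1 < r → r < 2 →
      r ^ (1 / (2 * r)) * (r / (r - 1)) ^ (-(1 / (2 * (r / (r - 1))))) < 1 := by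
  intro r hr1 hr2
  have hr0 : (0:ℝ) < r := by linarith
  have hs : (0:ℝ) < r - 1 := by linarith
  have ht : (0:ℝ) < r / (r - 1) := div_pos hr0 hs
  have hlogr : Real.log r < r - 1 := Real.log_lt_sub_one_of_pos hr0 (by linarith)
  have hlogs : Real.log (r - 1) < (r - 1) - 1 :=
    Real.log_lt_sub_one_of_pos hs (by linarith)
  have hlogrpos : 0 < Real.log r := Real.log_pos hr1
  have hlogt : Real.log (r / (r - 1)) = Real.log r - Real.log (r - 1) :=
    Real.log_div (ne_of_gt hr0) (ne_of_gt hs)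
  -- key inequality: t * log r < r * log t
  have key : (r / (r - 1)) * Real.log r < r * Real.log (r / (r - 1)) := by
    rw [hlogt, div_mul_eq_mul_div, div_lt_iff₀ hs]
    nlinarith [mul_pos hs hlogrpos, mul_pos hr0 hlogrpos,
      mul_lt_mul_of_pos_left hlogr (by linarith : (0:ℝ) < 2 - r),
      mul_lt_mul_of_pos_left hlogs hs]
  rw [Real.rpow_def_of_pos hr0, Real.rpow_def_of_pos ht, ← Real.exp_add, Real.exp_lt_one_iff]
  have h2r : (0:ℝ) < 2 * r := by linarith
  have h2t : (0:ℝ) < 2 * (r / (r - 1)) := by linarith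
  have heq : Real.log r * (1 / (2 * r)) + Real.log (r / (r - 1)) * -(1 / (2 * (r / (r - 1))))
      = ((r / (r - 1)) * Real.log r - r * Real.log (r / (r - 1))) / (2 * r * (r / (r - 1))) := by
    field_simp
    ring
  rw [heq]
  exact div_neg_of_neg_of_pos (by linarith) (by positivity)
end

section
/- Let f, g : ℝ → ℂ be nonzero Schwartz functions and let 1 ≤ s < p ≤ 2. Define G_t(ξ, η) = ĝ(η) t^{-1/p'} f̂(t^{-1}(ξ - η)) for t > 0. Then the mixed norm ‖G_t‖_{L^{p'}_ξ L^{s'}_η} (taking the L^{s'} norm in η first, then the L^{p'} norm in ξ) tends to infinity as t → 0⁺. -/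
open MeasureTheory Real ENNReal Filter Topology
noncomputable section

/-- Fourier transform on ℝ. -/
def FT1R (f : ℝ → ℂ) (ξ : ℝ) : ℂ :=
  ∫ x : ℝ, Complex.exp (((-2 * π * (x * ξ)) : ℝ) * Complex.I) * f x

/-- Fourier transform on ℝ². -/
def FT2R (F : ℝ × ℝ → ℂ) (ξ η : ℝ) : ℂ :=
  ∫ z : ℝ × ℝ, Complex.exp (((-2 * π * (z.1 * ξ + z.2 * η)) : ℝ) * Complex.I) * F z

/-- L^p norm of an ℝ≥0∞-valued function. -/
def lpNormENN {α : Type*} [MeasureSpace α] (p : ℝ≥0∞) (f : α → ℝ≥0∞) : ℝ≥0∞ :=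
  if p = ∞ then essSup f volume else (∫⁻ x, f x ^ p.toReal) ^ (1 / p.toReal)

/-- Mixed norm: inner L^s norm in the second variable, outer L^p norm in the first. -/
def mixedNorm {α β : Type*} [MeasureSpace α] [MeasureSpace β]
    (p s : ℝ≥0∞) (F : α × β → ℂ) : ℝ≥0∞ :=
  lpNormENN p (fun x => eLpNorm (fun y => F (x, y)) s volume)

/-!
`ĝ` and `f̂` are continuous and nonzero, so `|ĝ| ≥ c` on `[η₀ - δ, η₀ + δ]` and `|f̂| ≥ c'` on
`[u₀ - δ', u₀ + δ']`. Hence `|G_t| ≥ c c' t^{-1/p'}` on the parallelogram where `ξ` lies within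
`δ/2` of `η₀ + t u₀` and `η` within `t δ'` of `ξ - t u₀`. Each `η`-section has length `2 t δ'`, so
the inner `L^{s'}` norm is `≳ t^{1/s' - 1/p'}` on a `ξ`-interval of fixed length, and `s < p`
forces `1/s' < 1/p'`.
-/

open Metric FourierTransform

lemma FT1R_eq_fourier (f : ℝ → ℂ) : FT1R f = 𝓕 f := by
  funext ξ
  rw [Real.fourier_real_eq_integral_exp_smul]
  simp only [FT1R, smul_eq_mul]
  congr 1
  funext v
  norm_num [mul_assoc]

lemma SchwartzMap.FT1R_eq_coe_fourier (f : SchwartzMap ℝ ℂ) :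
    FT1R f = ⇑(𝓕 f : SchwartzMap ℝ ℂ) := by
  rw [FT1R_eq_fourier, SchwartzMap.fourier_coe]

lemma SchwartzMap.continuous_FT1R (f : SchwartzMap ℝ ℂ) : Continuous (FT1R f) := by
  rw [f.FT1R_eq_coe_fourier]
  exact SchwartzMap.continuous _

lemma SchwartzMap.FT1R_ne_zero {f : SchwartzMap ℝ ℂ} (hf : f ≠ 0) : FT1R f ≠ 0 := by
  rw [f.FT1R_eq_coe_fourier]
  intro h
  apply hf
  have hF : (𝓕 f : SchwartzMap ℝ ℂ) = 0 := SchwartzMap.ext fun x => by simpa using congrFun h x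
  rw [← FourierPair.fourierInv_fourier_eq (F := SchwartzMap ℝ ℂ) f, hF, fourierInv_zero]

lemma Continuous.exists_le_norm_on_closedBall {X E : Type*} [PseudoMetricSpace X]
    [NormedAddCommGroup E] {f : X → E} (hf : Continuous f) (h0 : f ≠ 0) :
    ∃ x₀ c δ, 0 < c ∧ 0 < δ ∧ ∀ x ∈ closedBall x₀ δ, c ≤ ‖f x‖ := by
  obtain ⟨x₀, hx₀⟩ := Function.ne_iff.mp h0
  have hpos : 0 < ‖f x₀‖ := norm_pos_iff.mpr hx₀
  have hnear : ∀ᶠ x in 𝓝 x₀, ‖f x₀‖ / 2 < ‖f x‖ :=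
    hf.norm.continuousAt.eventually (lt_mem_nhds (half_lt_self hpos))
  obtain ⟨δ, hδ, hball⟩ := nhds_basis_closedBall.eventually_iff.mp hnear
  exact ⟨x₀, ‖f x₀‖ / 2, δ, half_pos hpos, hδ, fun x hx => (hball hx).le⟩

lemma ofReal_mul_measure_rpow_le_eLpNorm {α E : Type*} [MeasurableSpace α]
    [NormedAddCommGroup E] {μ : Measure α} {s : ℝ≥0∞} (hs : s ≠ 0) {f : α → E} {A : Set α}
    (hA : MeasurableSet A) (hμA : μ A ≠ 0) {a : ℝ} (ha : 0 ≤ a) (h : ∀ y ∈ A, a ≤ ‖f y‖) :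
    ENNReal.ofReal a * μ A ^ (1 / s.toReal) ≤ eLpNorm f s μ :=
  calc ENNReal.ofReal a * μ A ^ (1 / s.toReal)
      = eLpNorm (A.indicator fun _ => a) s μ := by
        rw [eLpNorm_indicator_const' hA hμA hs, Real.enorm_eq_ofReal ha]
    _ ≤ eLpNorm f s μ := eLpNorm_mono fun y => by
        by_cases hy : y ∈ A
        · simpa [hy, abs_of_nonneg ha] using h y hy
        · simp [hy]

lemma mul_volume_rpow_le_lpNormENN {α : Type*} [MeasureSpace α] {p : ℝ≥0∞} (hp0 : p ≠ 0)
    (hp : p ≠ ∞) {f : α → ℝ≥0∞} {S : Set α} (hS : MeasurableSet S) {b : ℝ≥0∞}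
    (h : ∀ x ∈ S, b ≤ f x) : b * volume S ^ (1 / p.toReal) ≤ lpNormENN p f := by
  have hpr : 0 < p.toReal := ENNReal.toReal_pos hp0 hp
  rw [lpNormENN, if_neg hp]
  calc b * volume S ^ (1 / p.toReal)
      = (b ^ p.toReal * volume S) ^ (1 / p.toReal) := by
        rw [ENNReal.mul_rpow_of_nonneg _ _ (by positivity), ← ENNReal.rpow_mul,
          mul_one_div_cancel hpr.ne', ENNReal.rpow_one]
    _ = (∫⁻ x, S.indicator (fun _ => b ^ p.toReal) x) ^ (1 / p.toReal) := by
        rw [lintegral_indicator_const hS]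
    _ ≤ (∫⁻ x, f x ^ p.toReal) ^ (1 / p.toReal) := by
        gcongr with x
        exact Set.indicator_apply_le' (fun hx => ENNReal.rpow_le_rpow (h x hx) hpr.le)
          fun _ => zero_le

lemma ofReal_mul_rpow_mul_rpow_le_mixedNorm {α β : Type*} [MeasureSpace α] [MeasureSpace β]
    {p s : ℝ≥0∞} (hp0 : p ≠ 0) (hp : p ≠ ∞) (hs : s ≠ 0) {F : α × β → ℂ} {S : Set α}
    {A : α → Set β} {a : ℝ} {m : ℝ≥0∞} (ha : 0 ≤ a) (hm : m ≠ 0) (hS : MeasurableSet S)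
    (hA : ∀ x ∈ S, MeasurableSet (A x)) (hAm : ∀ x ∈ S, volume (A x) = m)
    (hF : ∀ x ∈ S, ∀ y ∈ A x, a ≤ ‖F (x, y)‖) :
    ENNReal.ofReal a * m ^ (1 / s.toReal) * volume S ^ (1 / p.toReal) ≤ mixedNorm p s F :=
  mul_volume_rpow_le_lpNormENN hp0 hp hS fun x hx => by
    rw [← hAm x hx]
    exact ofReal_mul_measure_rpow_le_eLpNorm hs (hA x hx) (by rwa [hAm x hx]) ha (hF x hx)

lemma tendsto_ofReal_mul_rpow_nhdsGT_zero {C r : ℝ} (hC : 0 < C) (hr : r < 0) :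
    Tendsto (fun t : ℝ => ENNReal.ofReal (C * t ^ r)) (𝓝[>] 0) (𝓝 ∞) :=
  ENNReal.tendsto_ofReal_atTop.comp ((tendsto_rpow_neg_nhdsGT_zero hr).const_mul_atTop hC)

namespace ENNReal

variable {p q s p' s' : ℝ≥0∞}

lemma ne_zero_of_one_div_add_one_div_eq_one (h : 1 / p + 1 / q = 1) : q ≠ 0 := by
  rintro rfl
  simp at h

lemma ne_top_of_one_div_add_one_div_eq_one (hp : 1 < p) (h : 1 / p + 1 / q = 1) : q ≠ ∞ := by
  rintro rfl
  simp_all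

lemma one_div_toReal_lt_one_div_toReal_of_lt (hsp : s < p)
    (hpconj : 1 / p + 1 / p' = 1) (hsconj : 1 / s + 1 / s' = 1) :
    1 / s'.toReal < 1 / p'.toReal := by
  have hlt : 1 / s' < 1 / p' := by
    by_contra! hle
    have h1s : 1 / p < 1 / s := by simpa only [one_div] using ENNReal.inv_lt_inv.mpr hsp
    refine lt_irrefl (1 : ℝ≥0∞) ?_
    calc (1 : ℝ≥0∞) = 1 / p + 1 / p' := hpconj.symm
      _ ≤ 1 / p + 1 / s' := add_le_add_right hle _
      _ < 1 / s + 1 / s' :=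
          ENNReal.add_lt_add_right (by simpa using ne_zero_of_one_div_add_one_div_eq_one hsconj) h1s
      _ = 1 := hsconj
  have hfin : 1 / p' ≠ ∞ := by simpa using ne_zero_of_one_div_add_one_div_eq_one hpconj
  simpa only [toReal_div, toReal_one] using toReal_strict_mono hfin hlt

end ENNReal

lemma le_norm_mul_rpow_mul_comp_scaled {ψ φ : ℝ → ℂ} {η₀ u₀ c c' δ δ' t α : ℝ} (hc' : 0 ≤ c')
    (hψ : ∀ η ∈ closedBall η₀ δ, c ≤ ‖ψ η‖) (hφ : ∀ u ∈ closedBall u₀ δ', c' ≤ ‖φ u‖)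
    (ht : 0 < t) (htδ : t * δ' ≤ δ / 2) {ξ η : ℝ} (hξ : ξ ∈ closedBall (η₀ + t * u₀) (δ / 2))
    (hη : η ∈ closedBall (ξ - t * u₀) (t * δ')) :
    c * c' * t ^ (-α) ≤ ‖ψ η * ((t ^ (-α) : ℝ) : ℂ) * φ (t⁻¹ * (ξ - η))‖ := by
  have hη₀ : η ∈ closedBall η₀ δ := by
    rw [mem_closedBall, Real.dist_eq, abs_le] at hξ hη ⊢
    constructor <;> linarith
  have hu : t⁻¹ * (ξ - η) ∈ closedBall u₀ δ' := by
    have hshift : t⁻¹ * (ξ - η) - u₀ = t⁻¹ * ((ξ - t * u₀) - η) := by field_simp; ring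
    rw [mem_closedBall, Real.dist_eq, hshift, abs_mul, abs_inv, abs_of_pos ht, ← Real.dist_eq,
      dist_comm]
    calc t⁻¹ * dist η (ξ - t * u₀) ≤ t⁻¹ * (t * δ') := by gcongr; exact hη
      _ = δ' := by field_simp
  rw [norm_mul, norm_mul, Complex.norm_real, Real.norm_of_nonneg (rpow_nonneg ht.le _)]
  calc c * c' * t ^ (-α) ≤ ‖ψ η‖ * ‖φ (t⁻¹ * (ξ - η))‖ * t ^ (-α) := by
        gcongr
        exacts [hψ η hη₀, hφ _ hu]
    _ = _ := by ring

lemma ofReal_mul_rpow_le_mixedNorm_scaled {p s : ℝ≥0∞} (hp0 : p ≠ 0) (hp : p ≠ ∞) (hs : s ≠ 0)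
    {ψ φ : ℝ → ℂ} {η₀ u₀ c c' δ δ' t : ℝ} (hc : 0 ≤ c) (hc' : 0 ≤ c') (hδ' : 0 < δ')
    (hψ : ∀ η ∈ closedBall η₀ δ, c ≤ ‖ψ η‖) (hφ : ∀ u ∈ closedBall u₀ δ', c' ≤ ‖φ u‖)
    (ht : 0 < t) (htδ : t * δ' ≤ δ / 2) :
    ENNReal.ofReal (c * c' * (2 * δ') ^ (1 / s.toReal) * δ ^ (1 / p.toReal) *
        t ^ (1 / s.toReal - 1 / p.toReal)) ≤
      mixedNorm p s (fun z : ℝ × ℝ => ψ z.2 * ((t ^ (-(1 / p.toReal)) : ℝ) : ℂ) *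
        φ (t⁻¹ * (z.1 - z.2))) := by
  have hδ : 0 ≤ δ := by nlinarith [mul_pos ht hδ']
  have hbox := ofReal_mul_rpow_mul_rpow_le_mixedNorm hp0 hp hs
    (F := fun z : ℝ × ℝ => ψ z.2 * ((t ^ (-(1 / p.toReal)) : ℝ) : ℂ) * φ (t⁻¹ * (z.1 - z.2)))
    (S := closedBall (η₀ + t * u₀) (δ / 2)) (A := fun ξ => closedBall (ξ - t * u₀) (t * δ'))
    (a := c * c' * t ^ (-(1 / p.toReal))) (m := ENNReal.ofReal (2 * (t * δ')))
    (by positivity) (by simp only [ne_eq, ENNReal.ofReal_eq_zero, not_le]; positivity)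
    measurableSet_closedBall (fun _ _ => measurableSet_closedBall)
    (fun _ _ => Real.volume_closedBall _ _)
    (fun ξ hξ η hη => le_norm_mul_rpow_mul_comp_scaled hc' hψ hφ ht htδ hξ hη)
  refine le_trans (le_of_eq ?_) hbox
  rw [Real.volume_closedBall, ENNReal.ofReal_rpow_of_nonneg (by positivity) (by positivity),
    ENNReal.ofReal_rpow_of_nonneg (by positivity) (by positivity), ← ENNReal.ofReal_mul
    (by positivity), ← ENNReal.ofReal_mul (by positivity)]
  congr 1
  rw [show 2 * (t * δ') = 2 * δ' * t by ring, show 2 * (δ / 2) = δ by ring,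
    mul_rpow (by positivity) ht.le, rpow_sub ht, rpow_neg ht.le]
  field_simp

theorem mixedNorm_blowup_general (f g : SchwartzMap ℝ ℂ) (hf : f ≠ 0) (hg : g ≠ 0)
    (p s p' s' : ℝ≥0∞) (hs : 1 ≤ s) (hsp : s < p)
    (hpconj : 1 / p + 1 / p' = 1) (hsconj : 1 / s + 1 / s' = 1) :
    Tendsto
      (fun t : ℝ =>
        mixedNorm p' s'
          (fun z : ℝ × ℝ =>
            FT1R (fun y => g y) z.2 * ((t ^ (-(1 / p'.toReal)) : ℝ) : ℂ) *
              FT1R (fun x => f x) (t⁻¹ * (z.1 - z.2))))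
      (𝓝[>] (0 : ℝ)) (𝓝 (∞ : ℝ≥0∞)) := by
  obtain ⟨η₀, c, δ, hc, hδ, hψ⟩ :=
    g.continuous_FT1R.exists_le_norm_on_closedBall (g.FT1R_ne_zero hg)
  obtain ⟨u₀, c', δ', hc', hδ', hφ⟩ :=
    f.continuous_FT1R.exists_le_norm_on_closedBall (f.FT1R_ne_zero hf)
  have hp'0 := ENNReal.ne_zero_of_one_div_add_one_div_eq_one hpconj
  have hp'top := ENNReal.ne_top_of_one_div_add_one_div_eq_one (hs.trans_lt hsp) hpconj
  have hs'0 := ENNReal.ne_zero_of_one_div_add_one_div_eq_one hsconj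
  have hexp := ENNReal.one_div_toReal_lt_one_div_toReal_of_lt hsp hpconj hsconj
  refine tendsto_nhds_top_mono (tendsto_ofReal_mul_rpow_nhdsGT_zero
    (C := c * c' * (2 * δ') ^ (1 / s'.toReal) * δ ^ (1 / p'.toReal)) (by positivity)
    (sub_neg.mpr hexp)) ?_
  filter_upwards [Ioo_mem_nhdsGT (show 0 < δ / (2 * δ') by positivity)] with t ⟨ht, htT⟩
  refine ofReal_mul_rpow_le_mixedNorm_scaled hp'0 hp'top hs'0 hc.le hc'.le hδ' hψ hφ ht ?_
  rw [lt_div_iff₀ (by positivity)] at htT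
  linarith

/-- For nonzero Schwartz `f, g` and exponents `1 ≤ s < p ≤ 2` with conjugates `p', s'`,
the mixed norm `‖G_t‖_{L^{p'}_ξ L^{s'}_η}` of
`G_t (ξ, η) = ĝ(η) t^{-1/p'} f̂(t⁻¹(ξ - η))` tends to `∞` as `t → 0⁺`. -/
theorem mixedNorm_blowup (f g : SchwartzMap ℝ ℂ) (hf : f ≠ 0) (hg : g ≠ 0)
    (p s p' s' : ℝ≥0∞) (hs : 1 ≤ s) (hsp : s < p) (hp2 : p ≤ 2)
    (hpconj : 1 / p + 1 / p' = 1) (hsconj : 1 / s + 1 / s' = 1) :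
    Tendsto
      (fun t : ℝ =>
        mixedNorm p' s'
          (fun z : ℝ × ℝ =>
            FT1R (fun y => g y) z.2 * ((t ^ (-(1 / p'.toReal)) : ℝ) : ℂ) *
              FT1R (fun x => f x) (t⁻¹ * (z.1 - z.2))))
      (𝓝[>] (0 : ℝ)) (𝓝 (∞ : ℝ≥0∞)) :=
  mixedNorm_blowup_general f g hf hg p s p' s' hs hsp hpconj hsconj
end
end
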